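/- arXiv:1301.2171 — 2 statements merged into one kernel-verified Lean document; each statement's English description precedes it below -/
import Mathlib

section
/- Let Ω be a countably infinite set. A subsemigroup M of Ω^Ω with S_{1,2,3,4,5} ⊆ M ⊊ S_4 is a maximal subsemigroup of S_4 (i.e. there is no subsemigroup T with M ⊊ T ⊊ S_4) if and only if M is one of V, S_{2,4}, S_{3,4}, S_{4,5}. -/
/-!
Setting: `Ω` is a countably infinite set, `Function.End Ω = Ω → Ω` is the full
transformation semigroup (a subset is closed under composition in one order iff
it is closed in the other, so the lattice of subsemigroups is unaffected by the
left-to-right convention of the paper).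
-/

open Cardinal

/-- A transversal of `f`: a set on which `f` is injective and whose image is all of `Ωf`. -/
def IsTransversal {Ω : Type*} (f : Ω → Ω) (T : Set Ω) : Prop :=
  Set.InjOn f T ∧ f '' T = Set.range f

/-- The defect `d(f) = |Ω \ Ωf|`. -/
noncomputable def defect {Ω : Type*} (f : Ω → Ω) : Cardinal :=
  #((Set.range f)ᶜ : Set Ω)

/-- The collapse `c(f) = |Ω \ Σ|` for a transversal `Σ` of `f` (the value is
independent of the choice of transversal, so the infimum is the common value). -/
noncomputable def collapse {Ω : Type*} (f : Ω → Ω) : Cardinal :=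
  ⨅ T : {T : Set Ω // IsTransversal f T}, #(T.1ᶜ : Set Ω)

/-- The infinite contraction index `k(f) = |{α : αf⁻¹ infinite}|`. -/
noncomputable def contract {Ω : Type*} (f : Ω → Ω) : Cardinal :=
  #({α : Ω | (f ⁻¹' {α}).Infinite} : Set Ω)

def S1 {Ω : Type*} : Set (Function.End Ω) := {f | collapse f = 0 ∨ 0 < defect f}
def S2 {Ω : Type*} : Set (Function.End Ω) := {f | 0 < collapse f ∨ defect f = 0}
def S3 {Ω : Type*} : Set (Function.End Ω) := {f | collapse f < ℵ₀ ∨ ℵ₀ ≤ defect f}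
def S4 {Ω : Type*} : Set (Function.End Ω) := {f | ℵ₀ ≤ collapse f ∨ defect f < ℵ₀}
def S5 {Ω : Type*} : Set (Function.End Ω) := {f | contract f < ℵ₀}

/-- `Sym(Ω)`, the bijections of `Ω`. -/
def SymOmega {Ω : Type*} : Set (Function.End Ω) := {f | Function.Bijective f}

/-- `U = {f : d(f) = ∞ or 0 < c(f) < ∞} ∪ Sym(Ω)`. -/
def SetU {Ω : Type*} : Set (Function.End Ω) :=
  {f | ℵ₀ ≤ defect f ∨ (0 < collapse f ∧ collapse f < ℵ₀)} ∪ SymOmega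

/-- `V = {f : c(f) = ∞ or 0 < d(f) < ∞} ∪ Sym(Ω)`. -/
def SetV {Ω : Type*} : Set (Function.End Ω) :=
  {f | ℵ₀ ≤ collapse f ∨ (0 < defect f ∧ defect f < ℵ₀)} ∪ SymOmega

/-- `S_{1,2,3,4,5}`. -/
def S12345 {Ω : Type*} : Set (Function.End Ω) := S1 ∩ S2 ∩ S3 ∩ S4 ∩ S5

/-- The family `S_1, …, S_5` indexed by `Fin 5`. -/
def SS {Ω : Type*} : Fin 5 → Set (Function.End Ω) := ![S1, S2, S3, S4, S5]

/-!
Each of the four candidates is `S_4` minus one class of maps: the surjections with finite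
positive collapse (for `V`), the injections with finite positive defect (for `S_{2,4}`), the maps
with `c = ∞` and `d < ∞` (for `S_{3,4}`), and the maps with `k = ∞` (for `S_{4,5}`). Each candidate
is closed under composition by the inequalities `c(g) ≤ c(f ∘ g) ≤ c(f) + c(g)`,
`c(f) ≤ d(g) + c(f ∘ g)`, `d(g) ≤ c(f) + d(f ∘ g)`, `d(f) ≤ d(f ∘ g) ≤ d(f) + d(g)` and
`k(f ∘ g) ≤ k(f) + k(g)`.

Conversely, a semigroup `T ⊇ S_{1,2,3,4,5}` containing one map `x` of such a class contains the
whole class. A map `t` of the class is reached as `σ ∘ u ∘ x ∘ v`: the maps `u` and `v` are taken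
from a part of `S_4` already known to lie in `T` and are chosen so that `u ∘ x ∘ v` has the same
kernel and the same image as `t`, and then `t` differs from it by a permutation `σ`. For the
first two classes that part is `S_{1,2,3,4,5}`, for the third it is `S_{3,4,5}`, for the fourth
`S_{4,5}`; so a semigroup between `S_{1,2,3,4,5}` and `S_4` meeting all four classes is `S_4`.
-/

open Set Function

universe u

theorem Cardinal.aleph0_le_mk_set_iff {α : Type*} {s : Set α} : ℵ₀ ≤ #s ↔ s.Infinite :=
  aleph0_le_mk_iff.trans infinite_coe_iff

theorem Cardinal.mk_le_mk_of_mapsTo {α β : Type u} {A : Set α} {B : Set β} {φ : α → β}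
    (hinj : InjOn φ A) (hmaps : MapsTo φ A B) : #A ≤ #B :=
  (mk_image_eq_of_injOn φ A hinj).symm.le.trans (mk_le_mk_of_subset hmaps.image_subset)

variable {Ω : Type*}

section Transversal

variable {f g : Ω → Ω} {S T T' : Set Ω}

theorem exists_isTransversal_superset (hS : InjOn f S) : ∃ T, S ⊆ T ∧ IsTransversal f T := by
  obtain ⟨T, hST, -, hT, hinj⟩ := hS.exists_subset_injOn_subset_range_eq (subset_univ S)
  exact ⟨T, hST, hinj, by rwa [image_univ] at hT⟩

theorem exists_isTransversal (f : Ω → Ω) : ∃ T, IsTransversal f T :=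
  (exists_isTransversal_superset (injOn_empty f)).imp fun _ ↦ And.right

theorem IsTransversal.exists_mem_apply_eq (hT : IsTransversal f T) (x : Ω) :
    ∃ t ∈ T, f t = f x := by
  rw [← mem_image, hT.2]
  exact mem_range_self x

theorem IsTransversal.infinite (hT : IsTransversal f T) (hf : (range f).Infinite) : T.Infinite :=
  Infinite.of_image f (hT.2 ▸ hf)

theorem IsTransversal.mk_diff_le (hT : IsTransversal f T) (hT' : IsTransversal f T') :
    #↥(T' \ T) ≤ #↥(T \ T') := by
  choose r hrT hr using hT.exists_mem_apply_eq
  refine mk_le_mk_of_mapsTo (φ := r) (fun x hx y hy hxy ↦ hT'.1 hx.1 hy.1 ?_) fun x hx ↦ ⟨hrT x, ?_⟩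
  · rw [← hr x, hxy, hr y]
  · intro hrx
    have := hT'.1 hrx hx.1 (hr x)
    exact hx.2 (this ▸ hrT x)

theorem IsTransversal.mk_compl_le (hT : IsTransversal f T) (hT' : IsTransversal f T') :
    #↥Tᶜ ≤ #↥T'ᶜ :=
  calc #↥Tᶜ ≤ #↥((T' \ T) ∪ (Tᶜ \ T')) := mk_le_mk_of_subset fun x hx ↦ by
          by_cases hx' : x ∈ T' <;> simp_all
    _ ≤ #↥(T' \ T) + #↥(Tᶜ \ T') := mk_union_le _ _
    _ ≤ #↥(T \ T') + #↥(Tᶜ \ T') := add_le_add_left (hT.mk_diff_le hT') _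
    _ = #↥T'ᶜ := by
      rw [← mk_union_of_disjoint (disjoint_compl_right.mono sdiff_subset sdiff_subset)]
      congr; ext x; by_cases x ∈ T <;> simp_all

theorem IsTransversal.collapse_eq (hT : IsTransversal f T) : collapse f = #↥Tᶜ := by
  have : Nonempty {T : Set Ω // IsTransversal f T} := ⟨⟨T, hT⟩⟩
  exact le_antisymm (ciInf_le' _ (⟨T, hT⟩ : {T : Set Ω // IsTransversal f T}))
    (le_ciInf fun T' ↦ hT.mk_compl_le T'.2)

end Transversal

section Comp

variable {f g : Ω → Ω}

theorem collapse_eq_zero_iff : collapse f = 0 ↔ Injective f := by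
  obtain ⟨T, hT⟩ := exists_isTransversal f
  rw [hT.collapse_eq, mk_set_eq_zero_iff, compl_empty_iff]
  refine ⟨fun h ↦ injOn_univ.1 (h ▸ hT.1), fun hf ↦ eq_univ_of_forall fun x ↦ ?_⟩
  obtain ⟨t, ht, hfx⟩ := hT.exists_mem_apply_eq x
  exact hf hfx ▸ ht

theorem defect_eq_zero_iff : defect f = 0 ↔ Surjective f := by
  rw [defect, mk_set_eq_zero_iff, compl_empty_iff, range_eq_univ]

theorem aleph0_le_collapse_of_infinite_fiber {z : Ω} (h : (f ⁻¹' {z}).Infinite) :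
    ℵ₀ ≤ collapse f := by
  obtain ⟨T, hT⟩ := exists_isTransversal f
  have hfin : (f ⁻¹' {z} ∩ T).Finite :=
    Subsingleton.finite fun x hx y hy ↦ hT.1 hx.2 hy.2 (hx.1.trans hy.1.symm)
  rw [hT.collapse_eq, aleph0_le_mk_set_iff]
  exact (h.sdiff hfin).mono fun x hx hxT ↦ hx.2 ⟨hx.1, hxT⟩

theorem contract_eq_zero_of_collapse_lt (h : collapse f < ℵ₀) : contract f = 0 := by
  rw [contract, mk_set_eq_zero_iff, eq_empty_iff_forall_notMem]
  exact fun z hz ↦ (aleph0_le_collapse_of_infinite_fiber hz).not_gt h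

theorem contract_le_one (p₀ : Ω) (h : ∀ p ≠ p₀, (f ⁻¹' {p}).Subsingleton) : contract f ≤ 1 :=
  (mk_le_mk_of_subset fun p (hp : (f ⁻¹' {p}).Infinite) ↦
    by_contra fun hne ↦ hp (h p hne).finite).trans (mk_singleton p₀).le

theorem infinite_range_of_defect_lt [Infinite Ω] (h : defect f < ℵ₀) :
    (range f).Infinite := by
  simpa using (lt_aleph0_iff_set_finite.1 h).infinite_compl

theorem infinite_range_of_aleph0_le_contract (h : ℵ₀ ≤ contract f) :
    (range f).Infinite :=
  (aleph0_le_mk_set_iff.1 h).mono fun _ (hz : (f ⁻¹' _).Infinite) ↦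
    let ⟨x, hx⟩ := hz.nonempty; ⟨x, hx⟩

theorem collapse_le_collapse_comp : collapse g ≤ collapse (f ∘ g) := by
  obtain ⟨S, hS⟩ := exists_isTransversal (f ∘ g)
  obtain ⟨T, hST, hT⟩ := exists_isTransversal_superset (f := g) (S := S)
    fun x hx y hy hxy ↦ hS.1 hx hy (congrArg f hxy)
  rw [hS.collapse_eq, hT.collapse_eq]
  exact mk_le_mk_of_subset (compl_subset_compl.2 hST)

theorem IsTransversal.exists_superset_image {S : Set Ω} (hS : IsTransversal (f ∘ g) S) :
    ∃ T, g '' S ⊆ T ∧ IsTransversal f T ∧ ∀ x ∈ T, f x ∈ range (f ∘ g) → x ∈ g '' S := by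
  obtain ⟨T, hST, hT⟩ := exists_isTransversal_superset (f := f) (S := g '' S) <| by
    rintro _ ⟨x, hx, rfl⟩ _ ⟨y, hy, rfl⟩ h
    rw [hS.1 hx hy h]
  refine ⟨T, hST, hT, fun x hx ⟨z, hz⟩ ↦ ?_⟩
  obtain ⟨s, hs, hfs⟩ := hS.exists_mem_apply_eq z
  rw [hT.1 hx (hST ⟨s, hs, rfl⟩) (hz.symm.trans hfs.symm)]
  exact mem_image_of_mem g hs

theorem collapse_le_defect_add_collapse_comp : collapse f ≤ defect g + collapse (f ∘ g) := by
  obtain ⟨S, hS⟩ := exists_isTransversal (f ∘ g)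
  obtain ⟨T, hST, hT, -⟩ := hS.exists_superset_image
  rw [hT.collapse_eq, hS.collapse_eq, defect]
  calc #↥Tᶜ ≤ #↥((range g)ᶜ ∪ g '' Sᶜ) := mk_le_mk_of_subset <| by
          intro x hx
          by_cases hxg : x ∈ range g
          · obtain ⟨y, rfl⟩ := hxg
            exact .inr ⟨y, fun hy ↦ hx (hST ⟨y, hy, rfl⟩), rfl⟩
          · exact .inl hxg
    _ ≤ #↥(range g)ᶜ + #↥(g '' Sᶜ) := mk_union_le _ _
    _ ≤ #↥(range g)ᶜ + #↥Sᶜ := by gcongr; exact mk_image_le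

theorem collapse_comp_le : collapse (f ∘ g) ≤ collapse f + collapse g := by
  obtain ⟨S, hS⟩ := exists_isTransversal (f ∘ g)
  obtain ⟨Tg, hSTg, hTg⟩ := exists_isTransversal_superset (f := g) (S := S)
    fun x hx y hy hxy ↦ hS.1 hx hy (congrArg f hxy)
  obtain ⟨Tf, -, hTf, hkey⟩ := hS.exists_superset_image
  rw [hS.collapse_eq, hTf.collapse_eq, hTg.collapse_eq, add_comm]
  calc #↥Sᶜ ≤ #↥(Tgᶜ ∪ (Tg \ S)) := mk_le_mk_of_subset fun x hx ↦ by
          by_cases x ∈ Tg <;> simp_all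
    _ ≤ #↥Tgᶜ + #↥(Tg \ S) := mk_union_le _ _
    _ ≤ #↥Tgᶜ + #↥Tfᶜ := by
      gcongr
      refine mk_le_mk_of_mapsTo (hTg.1.mono sdiff_subset) fun x hx hgx ↦ ?_
      obtain ⟨s, hs, hgs⟩ := hkey (g x) hgx ⟨x, rfl⟩
      exact hx.2 (hTg.1 (hSTg hs) hx.1 hgs ▸ hs)

theorem defect_le_collapse_add_defect_comp : defect g ≤ collapse f + defect (f ∘ g) := by
  obtain ⟨S, hS⟩ := exists_isTransversal (f ∘ g)
  obtain ⟨T, -, hT, hkey⟩ := hS.exists_superset_image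
  rw [hT.collapse_eq, defect, defect]
  calc #↥(range g)ᶜ ≤ #↥(Tᶜ ∪ ((range g)ᶜ ∩ T)) := mk_le_mk_of_subset fun x hx ↦ by
          by_cases x ∈ T <;> simp_all
    _ ≤ #↥Tᶜ + #↥((range g)ᶜ ∩ T) := mk_union_le _ _
    _ ≤ #↥Tᶜ + #↥(range (f ∘ g))ᶜ := by
      gcongr
      exact mk_le_mk_of_mapsTo (hT.1.mono inter_subset_right) fun x hx hfx ↦
        hx.1 (image_subset_range _ _ (hkey x hx.2 hfx))

theorem defect_le_defect_comp : defect f ≤ defect (f ∘ g) :=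
  mk_le_mk_of_subset (compl_subset_compl.2 (range_comp_subset_range g f))

theorem defect_comp_le : defect (f ∘ g) ≤ defect f + defect g :=
  calc #↥(range (f ∘ g))ᶜ ≤ #↥((range f)ᶜ ∪ f '' (range g)ᶜ) := mk_le_mk_of_subset <| by
          intro x hx
          by_cases hxf : x ∈ range f
          · obtain ⟨y, rfl⟩ := hxf
            exact .inr ⟨y, fun ⟨z, hz⟩ ↦ hx ⟨z, by simp [hz]⟩, rfl⟩
          · exact .inl hxf
    _ ≤ #↥(range f)ᶜ + #↥(f '' (range g)ᶜ) := mk_union_le _ _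
    _ ≤ #↥(range f)ᶜ + #↥(range g)ᶜ := by gcongr; exact mk_image_le

theorem contract_comp_le : contract (f ∘ g) ≤ contract f + contract g :=
  calc contract (f ∘ g)
      ≤ #↥({z | (f ⁻¹' {z}).Infinite} ∪ f '' {z | (g ⁻¹' {z}).Infinite}) := by
        refine mk_le_mk_of_subset fun z hz ↦ ?_
        by_contra! h
        simp only [mem_union, mem_ofPred_eq, not_or, not_infinite] at h
        refine hz ?_
        rw [preimage_comp, ← biUnion_preimage_singleton]
        exact h.1.biUnion fun y hy ↦ by_contra fun hy' ↦ h.2 ⟨y, not_finite.1 hy', hy⟩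
    _ ≤ contract f + #↥(f '' {z | (g ⁻¹' {z}).Infinite}) := mk_union_le _ _
    _ ≤ contract f + contract g := by gcongr; exact mk_image_le

end Comp

section Classes

variable {f g : Function.End Ω}

theorem mem_SymOmega_iff : f ∈ SymOmega ↔ collapse f = 0 ∧ defect f = 0 :=
  (collapse_eq_zero_iff.and defect_eq_zero_iff).symm

theorem mem_SetV_iff :
    f ∈ SetV ↔ ℵ₀ ≤ collapse f ∨ defect f < ℵ₀ ∧ (collapse f = 0 ∨ 0 < defect f) := by
  simp only [SetV, mem_union, mem_ofPred_eq, mem_SymOmega_iff]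
  rcases eq_zero_or_pos (defect f) with h | h
  · simp [h, aleph0_pos]
  · simp [h, h.ne']

theorem S2_mul_mem (hf : f ∈ S2) (hg : g ∈ S2) : f * g ∈ S2 := by
  rcases hg with hg | hg
  · exact .inl (hg.trans_le collapse_le_collapse_comp)
  rcases hf with hf | hf
  · have : collapse f ≤ collapse (f ∘ g) := by
      simpa [hg] using collapse_le_defect_add_collapse_comp (f := f) (g := g)
    exact .inl (hf.trans_le this)
  · have : defect (f ∘ g) ≤ 0 := by simpa [hf, hg] using defect_comp_le (f := f) (g := g)
    exact .inr (nonpos_iff_eq_zero.1 this)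

theorem S3_mul_mem (hf : f ∈ S3) (hg : g ∈ S3) : f * g ∈ S3 := by
  refine or_iff_not_imp_right.2 fun h ↦ ?_
  have hfg : defect (f ∘ g) < ℵ₀ := not_le.1 h
  have hcf := hf.resolve_right (defect_le_defect_comp.trans_lt hfg).not_ge
  have hdg := defect_le_collapse_add_defect_comp.trans_lt (add_lt_aleph0 hcf hfg)
  exact collapse_comp_le.trans_lt (add_lt_aleph0 hcf (hg.resolve_right hdg.not_ge))

theorem S4_mul_mem (hf : f ∈ S4) (hg : g ∈ S4) : f * g ∈ S4 := by
  refine or_iff_not_imp_left.2 fun h ↦ ?_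
  have hfg : collapse (f ∘ g) < ℵ₀ := not_le.1 h
  have hdg := hg.resolve_left (collapse_le_collapse_comp.trans_lt hfg).not_ge
  have hcf := collapse_le_defect_add_collapse_comp.trans_lt (add_lt_aleph0 hdg hfg)
  exact defect_comp_le.trans_lt (add_lt_aleph0 (hf.resolve_left hcf.not_ge) hdg)

theorem S5_mul_mem (hf : f ∈ S5) (hg : g ∈ S5) : f * g ∈ S5 :=
  contract_comp_le.trans_lt (add_lt_aleph0 hf hg)

theorem SetV_mul_mem (hf : f ∈ SetV) (hg : g ∈ SetV) : f * g ∈ SetV := by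
  rw [mem_SetV_iff] at hf hg ⊢
  rcases hg with hcg | ⟨hdg, hg⟩
  · exact .inl (hcg.trans collapse_le_collapse_comp)
  rcases hf with hcf | ⟨hdf, hf⟩
  · refine .inl (not_lt.1 fun h ↦ hcf.not_gt ?_)
    exact collapse_le_defect_add_collapse_comp.trans_lt (add_lt_aleph0 hdg h)
  refine .inr ⟨defect_comp_le.trans_lt (add_lt_aleph0 hdf hdg), ?_⟩
  rcases hf with hcf | hdf
  · rcases hg with hcg | hdg
    · have : collapse (f ∘ g) ≤ 0 := by
        simpa [hcf, hcg] using collapse_comp_le (f := f) (g := g)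
      exact .inl (nonpos_iff_eq_zero.1 this)
    · have : defect g ≤ defect (f ∘ g) := by
        simpa [hcf] using defect_le_collapse_add_defect_comp (f := f) (g := g)
      exact .inr (hdg.trans_le this)
  · exact .inr (hdf.trans_le defect_le_defect_comp)

theorem aleph0_le_collapse_of_contract_ne_zero (h : contract f ≠ 0) : ℵ₀ ≤ collapse f :=
  not_lt.1 fun hc ↦ h (contract_eq_zero_of_collapse_lt hc)

theorem mem_S4_diff_S2_iff : f ∈ S4 \ S2 ↔ collapse f = 0 ∧ 0 < defect f ∧ defect f < ℵ₀ := by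
  simp only [S4, S2, mem_sdiff, mem_ofPred_eq, not_or, pos_iff_ne_zero, ne_eq, not_not]
  refine ⟨fun ⟨h, hc, hd⟩ ↦ ⟨hc, hd, h.resolve_left ?_⟩, fun ⟨hc, hd0, hd⟩ ↦ ⟨.inr hd, hc, hd0⟩⟩
  simp [hc, aleph0_ne_zero]

theorem mem_S4_diff_SetV_iff : f ∈ S4 \ SetV ↔ defect f = 0 ∧ 0 < collapse f ∧ collapse f < ℵ₀ := by
  simp only [mem_sdiff, mem_SetV_iff, S4, mem_ofPred_eq, not_or, not_and, not_le,
    pos_iff_ne_zero, ne_eq, not_not]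
  refine ⟨fun ⟨h, hc, hV⟩ ↦ ?_, fun ⟨hd, hc0, hc⟩ ↦ ⟨.inr (hd ▸ aleph0_pos), hc, fun _ ↦ ⟨hc0, hd⟩⟩⟩
  exact ⟨(hV (h.resolve_left hc.not_ge)).2, (hV (h.resolve_left hc.not_ge)).1, hc⟩

theorem mem_S4_diff_S3_iff : f ∈ S4 \ S3 ↔ ℵ₀ ≤ collapse f ∧ defect f < ℵ₀ := by
  simp only [S4, S3, mem_sdiff, mem_ofPred_eq, not_or, not_lt, not_le]
  exact ⟨And.right, fun h ↦ ⟨.inl h.1, h⟩⟩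

theorem mem_S4_diff_S5_iff : f ∈ S4 \ S5 ↔ ℵ₀ ≤ contract f := by
  simp only [S4, S5, mem_sdiff, mem_ofPred_eq, not_lt]
  exact ⟨And.right, fun h ↦
    ⟨.inl (aleph0_le_collapse_of_contract_ne_zero (aleph0_pos.trans_le h).ne'), h⟩⟩

theorem mem_S12345_of_lt_aleph0 (hc0 : 0 < collapse f) (hc : collapse f < ℵ₀)
    (hd0 : 0 < defect f) (hd : defect f < ℵ₀) : f ∈ S12345 :=
  ⟨⟨⟨⟨.inr hd0, .inl hc0⟩, .inl hc⟩, .inr hd⟩,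
    (contract_eq_zero_of_collapse_lt hc).trans_lt aleph0_pos⟩

theorem SymOmega_subset_S12345 : (SymOmega : Set (Function.End Ω)) ⊆ S12345 := fun f hf ↦ by
  obtain ⟨hc, hd⟩ := mem_SymOmega_iff.1 hf
  have hc' : collapse f < ℵ₀ := hc ▸ aleph0_pos
  exact ⟨⟨⟨⟨.inl hc, .inr hd⟩, .inl hc'⟩, .inr (hd ▸ aleph0_pos)⟩,
    (contract_eq_zero_of_collapse_lt hc').trans_lt aleph0_pos⟩

theorem S12345_subset_SetV : (S12345 : Set (Function.End Ω)) ⊆ SetV :=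
  fun _ ⟨⟨⟨⟨hf1, _⟩, _⟩, hf4⟩, _⟩ ↦ mem_SetV_iff.2 (hf4.imp_right fun hd ↦ ⟨hd, hf1⟩)

theorem S3_inter_S4_inter_S5_subset :
    (S3 ∩ S4 ∩ S5 : Set (Function.End Ω)) ⊆ S12345 ∪ S4 \ S2 ∪ S4 \ SetV := by
  rintro f ⟨⟨hf3, hf4⟩, hf5⟩
  by_cases hf2 : f ∈ S2
  · by_cases hfV : f ∈ SetV
    · refine .inl (.inl ⟨⟨⟨⟨?_, hf2⟩, hf3⟩, hf4⟩, hf5⟩)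
      rcases mem_SetV_iff.1 hfV with hc | ⟨-, h⟩
      · exact .inr (aleph0_pos.trans_le (hf3.resolve_left hc.not_gt))
      · exact h
    · exact .inr ⟨hf4, hfV⟩
  · exact .inl (.inr ⟨hf4, hf2⟩)

theorem SetV_subset_S4 : (SetV : Set (Function.End Ω)) ⊆ S4 :=
  fun _ hf ↦ (mem_SetV_iff.1 hf).imp_right And.left

end Classes

section Kernel

variable {f ρ : Ω → Ω}

theorem ker_comp_of_injOn (hρ : InjOn ρ (range f)) : Setoid.ker (ρ ∘ f) = Setoid.ker f :=
  Setoid.ext fun x y ↦ ⟨fun h ↦ hρ (mem_range_self x) (mem_range_self y) h, congrArg ρ⟩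

theorem IsTransversal.comp_of_injOn {T : Set Ω} (hT : IsTransversal f T) (hρ : InjOn ρ (range f)) :
    IsTransversal (ρ ∘ f) T :=
  ⟨fun x hx y hy h ↦ hT.1 hx hy (hρ (mem_range_self x) (mem_range_self y) h), by
    rw [image_comp, hT.2, range_comp]⟩

theorem collapse_comp_of_injOn (hρ : InjOn ρ (range f)) : collapse (ρ ∘ f) = collapse f := by
  obtain ⟨T, hT⟩ := exists_isTransversal f
  rw [(hT.comp_of_injOn hρ).collapse_eq, hT.collapse_eq]

theorem contract_comp_of_injOn (hρ : InjOn ρ (range f)) : contract (ρ ∘ f) = contract f := by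
  have hfiber : ∀ p ∈ range f, (ρ ∘ f) ⁻¹' {ρ p} = f ⁻¹' {p} := fun p hp ↦
    ext fun x ↦ ⟨fun h ↦ hρ (mem_range_self x) hp h, fun h ↦ congrArg ρ h⟩
  have hK : {q | ((ρ ∘ f) ⁻¹' {q}).Infinite} = ρ '' {p | (f ⁻¹' {p}).Infinite} := by
    ext q
    refine ⟨fun hq ↦ ?_, ?_⟩
    · obtain ⟨x, rfl⟩ := hq.nonempty
      refine ⟨f x, ?_, rfl⟩
      show (f ⁻¹' {f x}).Infinite
      rwa [← hfiber _ (mem_range_self x)]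
    · rintro ⟨p, hp, rfl⟩
      obtain ⟨x, rfl⟩ := hp.nonempty
      rwa [mem_ofPred_eq, hfiber _ (mem_range_self x)]
  rw [contract, contract, hK, mk_image_eq_of_injOn]
  refine hρ.mono fun p (hp : (f ⁻¹' {p}).Infinite) ↦ ?_
  obtain ⟨x, hx⟩ := hp.nonempty
  exact ⟨x, hx⟩

theorem exists_perm_comp_eq {h t : Ω → Ω} (hker : Setoid.ker h = Setoid.ker t)
    (hrange : range h = range t) : ∃ σ : Equiv.Perm Ω, t = σ ∘ h := by
  rcases isEmpty_or_nonempty Ω with hΩ | hΩ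
  · exact ⟨1, funext isEmptyElim⟩
  have hker' : ∀ x y, h x = h y ↔ t x = t y := Setoid.ext_iff.1 hker
  have hρ : ∀ x, t (invFun h (h x)) = t x := fun x ↦ (hker' _ _).1 (invFun_eq ⟨x, rfl⟩)
  have hbij : BijOn (t ∘ invFun h) (range h) (range h) := by
    refine ⟨?_, ?_, ?_⟩
    · rintro _ ⟨x, rfl⟩
      exact hrange ▸ ⟨x, (hρ x).symm⟩
    · rintro _ ⟨x, rfl⟩ _ ⟨y, rfl⟩ hxy
      exact (hker' x y).2 ((hρ x).symm.trans (hxy.trans (hρ y)))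
    · rintro _ ⟨x, rfl⟩
      obtain ⟨y, hy⟩ : h x ∈ range t := hrange ▸ mem_range_self x
      exact ⟨h y, mem_range_self y, (hρ y).trans hy⟩
  classical
  refine ⟨Equiv.Perm.ofSubtype (hbij.equiv _), funext fun x ↦ ?_⟩
  rw [comp_apply, Equiv.Perm.ofSubtype_apply_of_mem _ (mem_range_self x)]
  exact (hρ x).symm

end Kernel

theorem exists_fiber_enumeration {y : Ω → Ω} (hy : ℵ₀ ≤ contract y) :
    ∃ (φ : ℕ → Ω) (ε : ℕ → ℕ → Ω), Injective φ ∧ (∀ i, Injective (ε i)) ∧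
      ∀ i n, y (ε i n) = φ i := by
  have hK : {z | (y ⁻¹' {z}).Infinite}.Infinite := aleph0_le_mk_set_iff.1 hy
  have hφ : ∀ i, (y ⁻¹' {(hK.natEmbedding _ i : Ω)}).Infinite := fun i ↦ (hK.natEmbedding _ i).2
  exact ⟨fun i ↦ hK.natEmbedding _ i, fun i n ↦ (hφ i).natEmbedding _ n,
    fun i j h ↦ (hK.natEmbedding _).injective (Subtype.ext h),
    fun i n m h ↦ ((hφ i).natEmbedding _).injective (Subtype.ext h),
    fun i n ↦ ((hφ i).natEmbedding _ n).2⟩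

section Countable

variable [Countable Ω]

theorem exists_bijOn {S R : Set Ω} (hS : S.Infinite) (hR : R.Infinite) :
    ∃ θ : Ω → Ω, BijOn θ S R := by
  have := hS.to_subtype
  have := hR.to_subtype
  obtain ⟨e⟩ := Cardinal.eq.1 ((mk_eq_aleph0 S).trans (mk_eq_aleph0 R).symm)
  classical
  refine ⟨fun x ↦ if hx : x ∈ S then e ⟨x, hx⟩ else x, fun x hx ↦ ?_,
    fun x hx y hy hxy ↦ ?_, fun y hy ↦ ⟨e.symm ⟨y, hy⟩, (e.symm _).2, by simp⟩⟩
  · simp [hx]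
  · exact congrArg Subtype.val (e.injective (Subtype.ext (by simpa [hx, hy] using hxy)))

theorem exists_isTransversal_range_eq {S R : Set Ω} (hS : S.Infinite) (hR : R.Infinite) :
    ∃ u : Ω → Ω, IsTransversal u S ∧ range u = R ∧ contract u ≤ 1 := by
  obtain ⟨θ, hθ⟩ := exists_bijOn hS hR
  obtain ⟨s₀, hs₀⟩ := hS.nonempty
  classical
  let u := S.piecewise θ fun _ ↦ θ s₀
  have hu : EqOn u θ S := piecewise_eqOn _ _ _
  have hu' : ∀ x ∉ S, u x = θ s₀ := fun x hx ↦ piecewise_eq_of_notMem _ _ _ hx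
  have hrange : range u = R := by
    refine (range_subset_iff.2 fun x ↦ ?_).antisymm ?_
    · by_cases hx : x ∈ S
      · exact hu hx ▸ hθ.mapsTo hx
      · exact hu' x hx ▸ hθ.mapsTo hs₀
    · rw [← hθ.image_eq, ← hu.image_eq]
      exact image_subset_range _ _
  refine ⟨u, ⟨hθ.injOn.congr hu.symm, by rw [hu.image_eq, hθ.image_eq, hrange]⟩, hrange,
    contract_le_one (θ s₀) fun p hp x hx y hy ↦ ?_⟩
  have hS' : ∀ z ∈ u ⁻¹' {p}, z ∈ S := fun z hz ↦ by_contra fun h ↦ hp (hz ▸ hu' z h)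
  exact hθ.injOn.congr hu.symm (hS' x hx) (hS' y hy) (hx.trans hy.symm)

theorem exists_comp_range_eq {h : Ω → Ω} {R : Set Ω} (hh : (range h).Infinite)
    (hR : R.Infinite) :
    ∃ u : Ω → Ω, Setoid.ker (u ∘ h) = Setoid.ker h ∧ range (u ∘ h) = R ∧
      collapse u = defect h ∧ defect u = #↥Rᶜ ∧ contract u ≤ 1 := by
  obtain ⟨u, hu, hrange, hk⟩ := exists_isTransversal_range_eq hh hR
  exact ⟨u, ker_comp_of_injOn hu.1, by rw [range_comp, hu.2, hrange], hu.collapse_eq,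
    by rw [defect, hrange], hk⟩

theorem exists_comp_ker_eq {b t : Ω → Ω} (hb : (range b).Infinite) (ht : (range t).Infinite) :
    ∃ v : Ω → Ω, Setoid.ker (b ∘ v) = Setoid.ker t ∧ range (b ∘ v) = range b ∧
      collapse v = collapse t ∧ contract v = contract t ∧ defect v = collapse b := by
  obtain ⟨E, hE⟩ := exists_isTransversal b
  obtain ⟨θ, hθ⟩ := exists_bijOn ht (hE.infinite hb)
  refine ⟨θ ∘ t, ?_, ?_, collapse_comp_of_injOn hθ.injOn, contract_comp_of_injOn hθ.injOn, ?_⟩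
  · rw [← comp_assoc, ker_comp_of_injOn (hE.1.comp hθ.injOn hθ.mapsTo)]
  · rw [range_comp, range_comp, hθ.image_eq, hE.2]
  · rw [defect, range_comp, hθ.image_eq, hE.collapse_eq]

theorem exists_comp_eq_injective_comp {y t : Ω → Ω} {γ : Ω} (hy : ℵ₀ ≤ contract y)
    (hγ : (t ⁻¹' {γ}).Infinite) :
    ∃ v ρ : Ω → Ω, Injective ρ ∧ y ∘ v = ρ ∘ t ∧ ℵ₀ ≤ collapse v ∧ contract v ≤ 1 ∧
      ℵ₀ ≤ defect (y ∘ v) := by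
  obtain ⟨φ, ε, hφ, hε, hyε⟩ := exists_fiber_enumeration hy
  obtain ⟨ψ, hψ⟩ := exists_injective_nat Ω
  classical
  -- `v` sends the `t`-class of `z` into the `y`-fibre over `φ (2 * ψ (t z))`, injectively except
  -- on the infinite class `t ⁻¹' {γ}`, which it collapses to a point; the fibres over `φ (odd)`
  -- are missed.
  let v z := ε (2 * ψ (t z)) (if t z = γ then 0 else ψ z)
  have hρ : Injective (φ ∘ (2 * ·) ∘ ψ) := hφ.comp ((mul_right_injective₀ two_ne_zero).comp hψ)
  have hyv : y ∘ v = (φ ∘ (2 * ·) ∘ ψ) ∘ t := funext fun z ↦ hyε _ _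
  refine ⟨v, _, hρ, hyv, ?_, ?_, ?_⟩
  · refine aleph0_le_collapse_of_infinite_fiber (z := ε (2 * ψ γ) 0) (hγ.mono fun z hz ↦ ?_)
    simp [v, show t z = γ from hz]
  · refine contract_le_one (ε (2 * ψ γ) 0) fun p hp z hz w hw ↦ ?_
    have htzw : t z = t w := hρ (congrFun hyv z ▸ congrFun hyv w ▸ congrArg y (hz.trans hw.symm))
    have hγz : t z ≠ γ := fun h ↦ hp (hz.symm.trans (by simp [v, h]))
    have hvzw : v z = v w := hz.trans hw.symm
    simp only [v, htzw, if_neg (htzw ▸ hγz)] at hvzw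
    exact hψ (hε _ hvzw)
  · rw [defect, aleph0_le_mk_set_iff]
    refine infinite_of_injective_forall_mem (f := fun j : ℕ ↦ φ (2 * j + 1))
      (fun i j h ↦ by simpa using hφ h) fun j ⟨z, hz⟩ ↦ ?_
    have := hφ ((hyε _ _).symm.trans hz)
    omega

end Countable

theorem mem_of_ker_eq_of_range_eq {T : Set (Function.End Ω)} (hT : ∀ a ∈ T, ∀ b ∈ T, a * b ∈ T)
    (hSym : SymOmega ⊆ T) {h t : Function.End Ω} (hh : h ∈ T)
    (hker : Setoid.ker h = Setoid.ker t) (hrange : range h = range t) : t ∈ T := by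
  obtain ⟨σ, rfl⟩ := exists_perm_comp_eq hker hrange
  exact hT _ (hSym σ.bijective) h hh

section Generation

variable [Countable Ω] {T : Set (Function.End Ω)}

theorem S4_diff_S2_subset_of_mem [Infinite Ω] (hT : ∀ a ∈ T, ∀ b ∈ T, a * b ∈ T) (hS : S12345 ⊆ T)
    {a : Function.End Ω} (haT : a ∈ T) (ha : a ∈ S4 \ S2) : S4 \ S2 ⊆ T := by
  intro t ht
  obtain ⟨hac, had0, had⟩ := mem_S4_diff_S2_iff.1 ha
  obtain ⟨htc, htd0, htd⟩ := mem_S4_diff_S2_iff.1 ht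
  obtain ⟨u, hker, hrange, huc, hud, -⟩ :=
    exists_comp_range_eq (infinite_range_of_defect_lt had) (infinite_range_of_defect_lt htd)
  have hud' : defect u = defect t := hud
  have hu : (u : Function.End Ω) ∈ S12345 :=
    mem_S12345_of_lt_aleph0 (huc ▸ had0) (huc ▸ had) (hud' ▸ htd0) (hud' ▸ htd)
  refine mem_of_ker_eq_of_range_eq hT (SymOmega_subset_S12345.trans hS) (hT u (hS hu) a haT)
    (hker.trans ?_) hrange
  rw [Setoid.ker_eq_bot_iff.2 (collapse_eq_zero_iff.1 hac),
    Setoid.ker_eq_bot_iff.2 (collapse_eq_zero_iff.1 htc)]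

theorem S4_diff_SetV_subset_of_mem [Infinite Ω] (hT : ∀ a ∈ T, ∀ b ∈ T, a * b ∈ T) (hS : S12345 ⊆ T)
    {b : Function.End Ω} (hbT : b ∈ T) (hb : b ∈ S4 \ SetV) : S4 \ SetV ⊆ T := by
  intro t ht
  obtain ⟨hbd, hbc0, hbc⟩ := mem_S4_diff_SetV_iff.1 hb
  obtain ⟨htd, htc0, htc⟩ := mem_S4_diff_SetV_iff.1 ht
  have hrb : range b = Set.univ := range_eq_univ.2 (defect_eq_zero_iff.1 hbd)
  have hrt : range t = Set.univ := range_eq_univ.2 (defect_eq_zero_iff.1 htd)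
  obtain ⟨v, hker, hrange, hvc, -, hvd⟩ :=
    exists_comp_ker_eq (hrb ▸ infinite_univ) (hrt ▸ infinite_univ)
  have hv : (v : Function.End Ω) ∈ S12345 :=
    mem_S12345_of_lt_aleph0 (hvc ▸ htc0) (hvc ▸ htc) (hvd ▸ hbc0) (hvd ▸ hbc)
  exact mem_of_ker_eq_of_range_eq hT (SymOmega_subset_S12345.trans hS) (hT b hbT v (hS hv)) hker
    (hrange.trans (hrb.trans hrt.symm))

theorem S4_inter_S5_subset_of_mem [Infinite Ω] (hT : ∀ a ∈ T, ∀ b ∈ T, a * b ∈ T)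
    (h345 : S3 ∩ S4 ∩ S5 ⊆ T) {x : Function.End Ω} (hxT : x ∈ T) (hx : x ∈ S4 \ S3) :
    S4 ∩ S5 ⊆ T := by
  rintro t ⟨ht4, ht5⟩
  by_cases ht3 : t ∈ S3
  · exact h345 ⟨⟨ht3, ht4⟩, ht5⟩
  obtain ⟨hxc, hxd⟩ := mem_S4_diff_S3_iff.1 hx
  obtain ⟨htc, htd⟩ := mem_S4_diff_S3_iff.1 ⟨ht4, ht3⟩
  obtain ⟨v, hker, hrange, hvc, hvk, hvd⟩ :=
    exists_comp_ker_eq (infinite_range_of_defect_lt hxd) (infinite_range_of_defect_lt htd)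
  have hv : (v : Function.End Ω) ∈ T :=
    h345 ⟨⟨.inr (hvd ▸ hxc), .inl (hvc ▸ htc)⟩, hvk.trans_lt ht5⟩
  have hxvd : defect (x ∘ v) = defect x := by rw [defect, hrange]; rfl
  obtain ⟨u, hker', hrange', huc, hud, huk⟩ :=
    exists_comp_range_eq (hrange ▸ infinite_range_of_defect_lt hxd)
      (infinite_range_of_defect_lt htd)
  have hu : (u : Function.End Ω) ∈ T :=
    h345 ⟨⟨.inl (huc.trans_lt (hxvd ▸ hxd)), .inr (hud.trans_lt htd)⟩, huk.trans_lt one_lt_aleph0⟩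
  refine mem_of_ker_eq_of_range_eq hT (fun σ hσ ↦ h345 ?_) (hT u hu _ (hT x hxT v hv))
    (hker'.trans hker) hrange'
  have hσ := SymOmega_subset_S12345 hσ
  exact ⟨⟨hσ.1.1.2, hσ.1.2⟩, hσ.2⟩

theorem S4_subset_of_mem (hT : ∀ a ∈ T, ∀ b ∈ T, a * b ∈ T) (h45 : S4 ∩ S5 ⊆ T)
    {y : Function.End Ω} (hyT : y ∈ T) (hy : y ∈ S4 \ S5) : S4 ⊆ T := by
  intro t ht4
  by_cases ht5 : t ∈ S5
  · exact h45 ⟨ht4, ht5⟩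
  have htk := mem_S4_diff_S5_iff.1 ⟨ht4, ht5⟩
  have ht := infinite_range_of_aleph0_le_contract htk
  obtain ⟨γ, hγ⟩ := (aleph0_le_mk_set_iff.1 htk).nonempty
  obtain ⟨v, ρ, hρ, hyv, hvc, hvk, hvd⟩ :=
    exists_comp_eq_injective_comp (mem_S4_diff_S5_iff.1 hy) hγ
  obtain ⟨u, hker, hrange, huc, -, huk⟩ := exists_comp_range_eq (h := y ∘ v)
    (by rw [hyv, show range (ρ ∘ t) = ρ '' range t from range_comp ρ t]; exact ht.image hρ.injOn) ht
  have hv : (v : Function.End Ω) ∈ T := h45 ⟨.inl hvc, hvk.trans_lt one_lt_aleph0⟩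
  have hu : (u : Function.End Ω) ∈ T := h45 ⟨.inl (huc ▸ hvd), huk.trans_lt one_lt_aleph0⟩
  refine mem_of_ker_eq_of_range_eq hT (fun σ hσ ↦ h45 ?_) (hT u hu _ (hT y hyT v hv))
    (hker.trans ?_) hrange
  · have hσ := SymOmega_subset_S12345 hσ
    exact ⟨hσ.1.2, hσ.2⟩
  · rw [hyv]
    exact ker_comp_of_injOn hρ.injOn

end Generation

section Witnesses

variable [Countable Ω]

theorem exists_collapse_eq_defect_eq {S R : Set Ω} (hS : S.Infinite) (hR : R.Infinite) :
    ∃ u : Function.End Ω, collapse u = #↥Sᶜ ∧ defect u = #↥Rᶜ := by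
  obtain ⟨u, hu, hrange, -⟩ := exists_isTransversal_range_eq hS hR
  exact ⟨u, hu.collapse_eq, by rw [defect, hrange]⟩

theorem exists_aleph0_le_contract_defect [Infinite Ω] :
    ∃ y : Function.End Ω, ℵ₀ ≤ contract y ∧ ℵ₀ ≤ defect y := by
  obtain ⟨_⟩ := nonempty_denumerable Ω
  let ι : Ω ≃ ℕ × ℕ := (Denumerable.eqv Ω).trans Nat.pairEquiv.symm
  refine ⟨fun x ↦ ι.symm (0, (ι x).2), ?_, ?_⟩
  · rw [contract, aleph0_le_mk_set_iff]
    refine infinite_of_injective_forall_mem (f := fun n ↦ ι.symm (0, n))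
      (fun m n h ↦ by simpa using h) fun n ↦ ?_
    exact infinite_of_injective_forall_mem (f := fun m ↦ ι.symm (m, n))
      (fun m m' h ↦ by simpa using h) fun m ↦ by simp
  · rw [defect, aleph0_le_mk_set_iff]
    exact infinite_of_injective_forall_mem (f := fun n ↦ ι.symm (1, n))
      (fun m n h ↦ by simpa using h) fun n ⟨x, hx⟩ ↦ by simp at hx

theorem exists_mem_S3_mem_S4_diff_S5 [Infinite Ω] : ∃ y : Function.End Ω, y ∈ S3 ∧ y ∈ S4 \ S5 :=
  let ⟨y, hk, hd⟩ := exists_aleph0_le_contract_defect (Ω := Ω)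
  ⟨y, .inr hd, mem_S4_diff_S5_iff.2 hk⟩

theorem SetV_ssubset_S4 [Infinite Ω] : (SetV : Set (Function.End Ω)) ⊂ S4 := by
  obtain ⟨p⟩ : Nonempty Ω := inferInstance
  obtain ⟨b, hbc, hbd⟩ :=
    exists_collapse_eq_defect_eq (finite_singleton p).infinite_compl infinite_univ
  rw [compl_compl, mk_singleton] at hbc
  rw [compl_univ, mk_eq_zero] at hbd
  have hb := mem_S4_diff_SetV_iff.2 ⟨hbd, hbc ▸ zero_lt_one, hbc ▸ one_lt_aleph0⟩
  exact (ssubset_iff_of_subset SetV_subset_S4).2 ⟨b, hb⟩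

theorem S2_inter_S4_ssubset_S4 [Infinite Ω] : (S2 ∩ S4 : Set (Function.End Ω)) ⊂ S4 := by
  obtain ⟨p⟩ : Nonempty Ω := inferInstance
  obtain ⟨a, hac, had⟩ :=
    exists_collapse_eq_defect_eq infinite_univ (finite_singleton p).infinite_compl
  rw [compl_compl, mk_singleton] at had
  rw [compl_univ, mk_eq_zero] at hac
  have ha := mem_S4_diff_S2_iff.2 ⟨hac, had ▸ zero_lt_one, had ▸ one_lt_aleph0⟩
  exact (ssubset_iff_of_subset inter_subset_right).2 ⟨a, ha.1, fun h ↦ ha.2 h.1⟩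

theorem S3_inter_S4_ssubset_S4 [Infinite Ω] : (S3 ∩ S4 : Set (Function.End Ω)) ⊂ S4 := by
  obtain ⟨y, hk, hd⟩ := exists_aleph0_le_contract_defect (Ω := Ω)
  obtain ⟨x, hxc, hxd⟩ :=
    exists_collapse_eq_defect_eq (infinite_range_of_aleph0_le_contract hk) infinite_univ
  rw [compl_univ, mk_eq_zero] at hxd
  have hx := mem_S4_diff_S3_iff.2 ⟨hd.trans_eq hxc.symm, hxd ▸ aleph0_pos⟩
  exact (ssubset_iff_of_subset inter_subset_right).2 ⟨x, hx.1, fun h ↦ hx.2 h.1⟩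

theorem S4_inter_S5_ssubset_S4 [Infinite Ω] : (S4 ∩ S5 : Set (Function.End Ω)) ⊂ S4 := by
  obtain ⟨y, -, hy⟩ := exists_mem_S3_mem_S4_diff_S5 (Ω := Ω)
  exact (ssubset_iff_of_subset inter_subset_left).2 ⟨y, hy.1, fun h ↦ hy.2 h.2⟩

end Witnesses

section Maximal

variable [Countable Ω] {T : Set (Function.End Ω)}

theorem S4_subset_of_SetV_ssubset [Infinite Ω] (hT : ∀ a ∈ T, ∀ b ∈ T, a * b ∈ T) (hVT : SetV ⊂ T)
    (hT4 : T ⊆ S4) : S4 ⊆ T := by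
  obtain ⟨b, hbT, hb⟩ := exists_of_ssubset hVT
  have hB := S4_diff_SetV_subset_of_mem hT (S12345_subset_SetV.trans hVT.subset) hbT ⟨hT4 hbT, hb⟩
  exact fun f hf ↦ (em (f ∈ SetV)).elim (hVT.subset ·) fun h ↦ hB ⟨hf, h⟩

theorem S4_subset_of_S2_inter_S4_ssubset [Infinite Ω] (hT : ∀ a ∈ T, ∀ b ∈ T, a * b ∈ T)
    (hMT : S2 ∩ S4 ⊂ T) (hT4 : T ⊆ S4) : S4 ⊆ T := by
  obtain ⟨a, haT, ha⟩ := exists_of_ssubset hMT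
  have hA := S4_diff_S2_subset_of_mem hT (fun f hf ↦ hMT.subset ⟨hf.1.1.1.2, hf.1.2⟩) haT
    ⟨hT4 haT, fun h ↦ ha ⟨h, hT4 haT⟩⟩
  exact fun f hf ↦ (em (f ∈ S2)).elim (fun h ↦ hMT.subset ⟨h, hf⟩) fun h ↦ hA ⟨hf, h⟩

theorem S4_subset_of_S3_inter_S4_ssubset [Infinite Ω] (hT : ∀ a ∈ T, ∀ b ∈ T, a * b ∈ T)
    (hMT : S3 ∩ S4 ⊂ T) (hT4 : T ⊆ S4) : S4 ⊆ T := by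
  obtain ⟨x, hxT, hx⟩ := exists_of_ssubset hMT
  have h45 := S4_inter_S5_subset_of_mem hT (fun f hf ↦ hMT.subset hf.1) hxT
    ⟨hT4 hxT, fun h ↦ hx ⟨h, hT4 hxT⟩⟩
  obtain ⟨y, hy3, hy⟩ := exists_mem_S3_mem_S4_diff_S5 (Ω := Ω)
  exact S4_subset_of_mem hT h45 (hMT.subset ⟨hy3, hy.1⟩) hy

theorem S4_subset_of_S4_inter_S5_ssubset (hT : ∀ a ∈ T, ∀ b ∈ T, a * b ∈ T)
    (hMT : S4 ∩ S5 ⊂ T) (hT4 : T ⊆ S4) : S4 ⊆ T := by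
  obtain ⟨y, hyT, hy⟩ := exists_of_ssubset hMT
  exact S4_subset_of_mem hT hMT.subset hyT ⟨hT4 hyT, fun h ↦ hy ⟨hT4 hyT, h⟩⟩

theorem S4_subset_of_not_subset [Infinite Ω] (hT : ∀ a ∈ T, ∀ b ∈ T, a * b ∈ T) (hS : S12345 ⊆ T)
    (hT4 : T ⊆ S4) (hV : ¬T ⊆ SetV) (h2 : ¬T ⊆ S2 ∩ S4) (h3 : ¬T ⊆ S3 ∩ S4)
    (h5 : ¬T ⊆ S4 ∩ S5) : S4 ⊆ T := by
  obtain ⟨a, haT, ha⟩ := not_subset.1 h2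
  obtain ⟨b, hbT, hb⟩ := not_subset.1 hV
  obtain ⟨x, hxT, hx⟩ := not_subset.1 h3
  obtain ⟨y, hyT, hy⟩ := not_subset.1 h5
  have hA := S4_diff_S2_subset_of_mem hT hS haT ⟨hT4 haT, fun h ↦ ha ⟨h, hT4 haT⟩⟩
  have hB := S4_diff_SetV_subset_of_mem hT hS hbT ⟨hT4 hbT, hb⟩
  have h345 := S3_inter_S4_inter_S5_subset.trans (union_subset (union_subset hS hA) hB)
  have h45 := S4_inter_S5_subset_of_mem hT h345 hxT ⟨hT4 hxT, fun h ↦ hx ⟨h, hT4 hxT⟩⟩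
  exact S4_subset_of_mem hT h45 hyT ⟨hT4 hyT, fun h ↦ hy ⟨hT4 hyT, h⟩⟩

end Maximal

/-- The maximal subsemigroups of `S₄` containing `S_{1,2,3,4,5}` are exactly
`V`, `S_{2,4}`, `S_{3,4}` and `S_{4,5}`. -/
theorem stmt16 (Ω : Type) [Countable Ω] [Infinite Ω] (M : Set (Function.End Ω))
    (hM : ∀ a ∈ M, ∀ b ∈ M, a * b ∈ M)
    (hsub : S12345 ⊆ M) (hlt : M ⊂ S4) :
    (¬ ∃ T : Set (Function.End Ω),
        (∀ a ∈ T, ∀ b ∈ T, a * b ∈ T) ∧ M ⊂ T ∧ T ⊂ S4) ↔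
      (M = SetV ∨ M = S2 ∩ S4 ∨ M = S3 ∩ S4 ∨ M = S4 ∩ S5) := by
  constructor
  · intro hmax
    have heq : ∀ N : Set (Function.End Ω), (∀ a ∈ N, ∀ b ∈ N, a * b ∈ N) → N ⊂ S4 → M ⊆ N →
        M = N := fun N hN hN4 hMN ↦ hMN.eq_of_not_ssubset fun hMN' ↦ hmax ⟨N, hN, hMN', hN4⟩
    by_contra! hne
    refine hlt.not_superset (S4_subset_of_not_subset hM hsub hlt.subset
      (fun h ↦ hne.1 (heq _ (fun a ha b hb ↦ SetV_mul_mem ha hb) SetV_ssubset_S4 h))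
      (fun h ↦ hne.2.1 (heq _ (fun a ha b hb ↦ ⟨S2_mul_mem ha.1 hb.1, S4_mul_mem ha.2 hb.2⟩)
        S2_inter_S4_ssubset_S4 h))
      (fun h ↦ hne.2.2.1 (heq _ (fun a ha b hb ↦ ⟨S3_mul_mem ha.1 hb.1, S4_mul_mem ha.2 hb.2⟩)
        S3_inter_S4_ssubset_S4 h))
      (fun h ↦ hne.2.2.2 (heq _ (fun a ha b hb ↦ ⟨S4_mul_mem ha.1 hb.1, S5_mul_mem ha.2 hb.2⟩)
        S4_inter_S5_ssubset_S4 h)))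
  · rintro (rfl | rfl | rfl | rfl) ⟨T, hT, hMT, hT4⟩ <;> refine hT4.not_superset ?_
    · exact S4_subset_of_SetV_ssubset hT hMT hT4.subset
    · exact S4_subset_of_S2_inter_S4_ssubset hT hMT hT4.subset
    · exact S4_subset_of_S3_inter_S4_ssubset hT hMT hT4.subset
    · exact S4_subset_of_S4_inter_S5_ssubset hT hMT hT4.subset
end

section
/- Let Ω be a countably infinite set. S_{1,2,3,4,5} is a maximal subsemigroup of each of S_{1,2,3,4}, S_{1,2,3,5}, S_{1,2,4,5}, S_{1,3,4,5}, and S_{2,3,4,5}; that is, for each four-element subset I of {1,2,3,4,5} there is no subsemigroup T of Ω^Ω with S_{1,2,3,4,5} ⊊ T ⊊ S_I. -/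
/-!
Setting: `Ω` is a countably infinite set, `Function.End Ω = Ω → Ω` is the full
transformation semigroup (a subset is closed under composition in one order iff
it is closed in the other, so the lattice of subsemigroups is unaffected by the
left-to-right convention of the paper).
-/

open Cardinal

/-
Let `S_I` omit one of the five semigroups and pick `f ∈ T \ S₁₂₃₄₅`. Every `g ∈ S_I \ S₁₂₃₄₅`
factors as `g = b ∘ f ∘ a` with `a, b ∈ S₁₂₃₄₅`, so `T` contains all of `S_I`.

If the omitted semigroup is one of `S₁, …, S₄`, then `f` and `g` have infinite image. Let `a`
map `Ω` onto a transversal of `f` with the kernel of `g`, and let `b` invert `f ∘ a` on its image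
and be constant elsewhere. Then `c(a) = c(g)`, `d(a) = c(f)`, `k(a) = k(g)`, `c(b) = d(f)`,
`d(b) = d(g)` and `k(b) ≤ 1`, which in each of the four cases puts `a` and `b` in `S₁₂₃₄₅`.

If it is `S₅`, then `f` has infinitely many infinite fibres and `d(f) = ∞`. Now `a` sends each
`g`-class injectively into its own infinite fibre of `f`, except for one infinite `g`-class,
which it collapses to a point; this gives `c(a) = d(a) = ∞` and `k(a) ≤ 1`, while `b` as
before has `c(b) ≥ d(f) = ∞`.
-/

namespace Transformation

open Set Function

variable {Ω : Type}

lemma exists_isTransversal (f : Ω → Ω) : ∃ T, IsTransversal f T := by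
  classical
  refine ⟨range (fun y : range f => (y.2.choose : Ω)), ?_, ?_⟩
  · rintro _ ⟨y, rfl⟩ _ ⟨y', rfl⟩ h
    simp only [y.2.choose_spec, y'.2.choose_spec] at h
    rw [Subtype.ext h]
  · refine (image_subset_range _ _).antisymm ?_
    rintro y hy
    exact ⟨_, ⟨⟨y, hy⟩, rfl⟩, hy.choose_spec⟩

lemma mk_compl_le_of_isTransversal {f : Ω → Ω} {T₁ T₂ : Set Ω} (h₁ : IsTransversal f T₁)
    (h₂ : IsTransversal f T₂) : #(T₁ᶜ : Set Ω) ≤ #(T₂ᶜ : Set Ω) := by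
  classical
  have hT₁ : ∀ x, f x ∈ f '' T₁ := fun x => h₁.2 ▸ mem_range_self x
  choose r hr using hT₁
  set ψ : Ω → Ω := fun x => if x ∈ T₂ then r x else x
  have hmaps : MapsTo ψ T₁ᶜ T₂ᶜ := by
    intro x hx
    by_cases hx₂ : x ∈ T₂
    · simp only [ψ, if_pos hx₂]
      intro hr₂
      exact hx (h₂.1 hr₂ hx₂ (hr x).2 ▸ (hr x).1)
    · simpa only [ψ, if_neg hx₂]
  have hinj : InjOn ψ T₁ᶜ := by
    intro x hx y hy hxy
    by_cases hx₂ : x ∈ T₂ <;> by_cases hy₂ : y ∈ T₂ <;>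
      simp only [ψ, hx₂, hy₂, if_true, if_false] at hxy
    · exact h₂.1 hx₂ hy₂ (by rw [← (hr x).2, hxy, (hr y).2])
    · exact absurd (hxy ▸ (hr x).1) hy
    · exact absurd (hxy ▸ (hr y).1) hx
    · exact hxy
  calc #(T₁ᶜ : Set Ω) = #(ψ '' T₁ᶜ) := (mk_image_eq_of_injOn _ _ hinj).symm
    _ ≤ #(T₂ᶜ : Set Ω) := mk_le_mk_of_subset hmaps.image_subset

lemma collapse_eq_mk_compl {f : Ω → Ω} {T : Set Ω} (hT : IsTransversal f T) :
    collapse f = #(Tᶜ : Set Ω) :=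
  have : Nonempty {T : Set Ω // IsTransversal f T} := ⟨⟨T, hT⟩⟩
  le_antisymm (ciInf_le' _ (⟨T, hT⟩ : {T : Set Ω // IsTransversal f T}))
    (le_ciInf fun T' => mk_compl_le_of_isTransversal hT T'.2)

lemma aleph0_le_collapse_of_infinite_fiber {f : Ω → Ω} {α : Ω} (h : (f ⁻¹' {α}).Infinite) :
    ℵ₀ ≤ collapse f := by
  obtain ⟨T, hT⟩ := exists_isTransversal f
  rw [collapse_eq_mk_compl hT, aleph0_le_mk_iff, infinite_coe_iff]
  have hfin : (f ⁻¹' {α} ∩ T).Subsingleton := fun x hx y hy =>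
    hT.1 hx.2 hy.2 (hx.1.trans hy.1.symm)
  exact ((h.sdiff hfin.finite).mono fun x hx hxT => hx.2 ⟨hx.1, hxT⟩)

lemma contract_lt_aleph0_of_collapse_lt {f : Ω → Ω} (h : collapse f < ℵ₀) :
    contract f < ℵ₀ := by
  have : {α : Ω | (f ⁻¹' {α}).Infinite} = ∅ :=
    eq_empty_of_forall_notMem fun _ hα => (aleph0_le_collapse_of_infinite_fiber hα).not_gt h
  simp [contract, this, aleph0_pos]

lemma isTransversal_comp {f φ : Ω → Ω} {T : Set Ω} (hT : IsTransversal f T)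
    (hφ : InjOn φ (range f)) : IsTransversal (φ ∘ f) T :=
  ⟨hφ.comp hT.1 fun x _ => mem_range_self x, by rw [image_comp, hT.2, range_comp]⟩

lemma collapse_comp_of_injOn {f φ : Ω → Ω} (hφ : InjOn φ (range f)) :
    collapse (φ ∘ f) = collapse f := by
  obtain ⟨T, hT⟩ := exists_isTransversal f
  rw [collapse_eq_mk_compl hT, collapse_eq_mk_compl (isTransversal_comp hT hφ)]

lemma contract_comp_of_injOn {f φ : Ω → Ω} (hφ : InjOn φ (range f)) :
    contract (φ ∘ f) = contract f := by
  have hfib : ∀ β ∈ range f, (φ ∘ f) ⁻¹' {φ β} = f ⁻¹' {β} := by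
    rintro β hβ
    ext x
    exact ⟨fun hx => hφ (mem_range_self x) hβ hx, fun hx => congrArg φ hx⟩
  have : {α | ((φ ∘ f) ⁻¹' {α}).Infinite} = φ '' {β | (f ⁻¹' {β}).Infinite} := by
    ext α
    constructor
    · intro hα
      obtain ⟨x, hx⟩ := hα.nonempty
      refine ⟨f x, ?_, hx⟩
      rwa [mem_ofPred_eq, ← hfib _ (mem_range_self x), show φ (f x) = α from hx]
    · rintro ⟨β, hβ, rfl⟩
      obtain ⟨x, rfl⟩ := hβ.nonempty
      rwa [mem_ofPred_eq, hfib _ (mem_range_self x)]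
  rw [contract, contract, this, mk_image_eq_of_injOn]
  exact hφ.mono fun β hβ => hβ.nonempty.imp fun x hx => hx

lemma infinite_range_of_defect_lt [Infinite Ω] {f : Ω → Ω} (h : defect f < ℵ₀) :
    (range f).Infinite := by
  rw [defect, lt_aleph0_iff_set_finite] at h
  simpa using h.infinite_compl

lemma infinite_iff_of_isTransversal {f : Ω → Ω} {T : Set Ω} (hT : IsTransversal f T) :
    T.Infinite ↔ (range f).Infinite := by
  rw [← hT.2, infinite_image_iff hT.1]

lemma infinite_range_of_collapse_lt [Infinite Ω] {f : Ω → Ω} (h : collapse f < ℵ₀) :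
    (range f).Infinite := by
  obtain ⟨T, hT⟩ := exists_isTransversal f
  rw [collapse_eq_mk_compl hT, lt_aleph0_iff_set_finite] at h
  exact (infinite_iff_of_isTransversal hT).1 (by simpa using h.infinite_compl)

lemma exists_leftInvOn_of_injOn [Nonempty Ω] (g θ : Ω → Ω) (hθ : InjOn θ (range g)) :
    ∃ b : Ω → Ω, (∀ x, b (θ (g x)) = g x) ∧ collapse b = #((range (θ ∘ g))ᶜ : Set Ω) ∧
      defect b = defect g ∧ contract b ≤ 1 := by
  classical
  obtain ⟨x₀⟩ := ‹Nonempty Ω›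
  set R := range (θ ∘ g)
  set b : Ω → Ω := fun y => if y ∈ R then invFunOn θ (range g) y else g x₀
  have hb : ∀ x, b (θ (g x)) = g x := fun x => by
    simp only [b, if_pos (show θ (g x) ∈ R from ⟨x, rfl⟩)]
    exact hθ.leftInvOn_invFunOn (mem_range_self x)
  have hbR : InjOn b R := by
    rintro _ ⟨x, rfl⟩ _ ⟨y, rfl⟩ h
    simp only [comp_apply, hb] at h ⊢
    rw [h]
  have hb_out : ∀ y ∉ R, b y = g x₀ := fun y hy => if_neg hy
  have hrange : range b = range g := by
    refine (range_subset_iff.2 fun y => ?_).antisymm (range_subset_iff.2 fun x => ⟨_, hb x⟩)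
    by_cases hy : y ∈ R
    · obtain ⟨x, rfl⟩ := hy
      exact hb x ▸ mem_range_self x
    · exact hb_out y hy ▸ mem_range_self x₀
  have hT : IsTransversal b R :=
    ⟨hbR, by rw [hrange, ← range_comp]; exact congrArg range (funext hb)⟩
  refine ⟨b, hb, collapse_eq_mk_compl hT, by rw [defect, defect, hrange], ?_⟩
  have hsub : {α | (b ⁻¹' {α}).Infinite} ⊆ {g x₀} := by
    intro α hα
    by_contra hne
    have hR : b ⁻¹' {α} ⊆ R := fun y hy =>
      by_contra fun hyR => hne (hb_out y hyR ▸ (hy : b y = α).symm)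
    exact hα (Subsingleton.finite fun y hy z hz => hbR (hR hy) (hR hz) (hy.trans hz.symm))
  calc contract b ≤ #({g x₀} : Set Ω) := mk_le_mk_of_subset hsub
    _ = 1 := mk_singleton _

lemma exists_bijOn_of_mk_eq {s t : Set Ω} (h : #s = #t) : ∃ φ : Ω → Ω, BijOn φ s t := by
  obtain ⟨e⟩ := Cardinal.eq.1 h
  set φ := extend ((↑) : s → Ω) (fun x => (e x : Ω)) id
  have he : ∀ x : s, φ x = e x := Subtype.val_injective.extend_apply _ _
  refine ⟨φ, fun x hx => he ⟨x, hx⟩ ▸ (e _).2, fun x hx y hy hxy => ?_, fun y hy => ?_⟩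
  · rw [he ⟨x, hx⟩, he ⟨y, hy⟩] at hxy
    exact congrArg Subtype.val (e.injective (Subtype.ext hxy))
  · exact ⟨e.symm ⟨y, hy⟩, (e.symm _).2, by rw [he, e.apply_symm_apply]⟩

lemma exists_factorization_of_infinite_range [Countable Ω] {f g : Ω → Ω}
    (hf : (range f).Infinite) (hg : (range g).Infinite) :
    ∃ a b : Ω → Ω, (∀ x, b (f (a x)) = g x) ∧
      collapse a = collapse g ∧ defect a = collapse f ∧ contract a = contract g ∧
      collapse b = defect f ∧ defect b = defect g ∧ contract b ≤ 1 := by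
  obtain ⟨T, hT⟩ := exists_isTransversal f
  have : Infinite T := ((infinite_iff_of_isTransversal hT).2 hf).to_subtype
  have : Infinite (range g) := hg.to_subtype
  have : Nonempty Ω := ⟨hf.nonempty.some⟩
  obtain ⟨φ, hφ⟩ := exists_bijOn_of_mk_eq (s := range g) (t := T) (by simp)
  obtain ⟨b, hb, hcb, hdb, hkb⟩ :=
    exists_leftInvOn_of_injOn g (f ∘ φ) (hT.1.comp hφ.injOn hφ.mapsTo)
  refine ⟨φ ∘ g, b, hb, collapse_comp_of_injOn hφ.injOn, ?_, contract_comp_of_injOn hφ.injOn, ?_,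
    hdb, hkb⟩
  · rw [defect, range_comp, hφ.image_eq, collapse_eq_mk_compl hT]
  · rw [hcb, defect, range_comp, image_comp, hφ.image_eq, hT.2]

lemma nonempty_embedding_of_infinite [Countable Ω] {s : Set Ω} (hs : s.Infinite) :
    Nonempty (Ω ↪ s) :=
  (le_def _ _).1 (mk_le_aleph0.trans (aleph0_le_mk_iff.2 hs.to_subtype))

lemma exists_factorization_of_infinite_contract [Countable Ω] {f g : Ω → Ω}
    (hf : {α | (f ⁻¹' {α}).Infinite}.Infinite) {β₀ : Ω} (hg : (g ⁻¹' {β₀}).Infinite) :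
    ∃ a b : Ω → Ω, (∀ x, b (f (a x)) = g x) ∧
      ℵ₀ ≤ collapse a ∧ ℵ₀ ≤ defect a ∧ contract a ≤ 1 ∧
      defect f ≤ collapse b ∧ defect b = defect g ∧ contract b ≤ 1 := by
  classical
  obtain ⟨θ⟩ := nonempty_embedding_of_infinite hf
  have hθ : Injective (fun z => (θ z : Ω)) := Subtype.val_injective.comp θ.injective
  have hN : ∀ z, ∃ n : Ω → Ω, Injective n ∧ ∀ y, f (n y) = θ z := fun z => by
    obtain ⟨e⟩ := nonempty_embedding_of_infinite (θ z).2
    exact ⟨fun y => e y, Subtype.val_injective.comp e.injective, fun y => (e y).2⟩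
  choose N hN hfN using hN
  obtain ⟨x₀, -⟩ := hg.nonempty
  set a : Ω → Ω := fun x => N (g x) (if g x = β₀ then x₀ else x)
  have hfa : ∀ x, f (a x) = θ (g x) := fun x => hfN _ _
  have hga : ∀ {x y}, a x = a y → g x = g y := fun h => hθ (by simp only [← hfa, h])
  have ha₀ : ∀ x, g x = β₀ → a x = N β₀ x₀ := fun x hx => by simp only [a, hx, if_true]
  have ha : ∀ {x y}, g x ≠ β₀ → a x = a y → x = y := fun {x y} hx h => by
    have hxy := hga h
    simp only [a, if_neg hx, ← hxy] at h
    exact hN _ h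
  have hc : ℵ₀ ≤ collapse a := aleph0_le_collapse_of_infinite_fiber (hg.mono ha₀)
  have hd : ℵ₀ ≤ defect a := by
    have : Infinite Ω := infinite_univ_iff.1 (hg.mono (subset_univ _))
    rw [defect, aleph0_le_mk_iff, infinite_coe_iff]
    refine ((finite_singleton x₀).infinite_compl.image (hN β₀).injOn).mono ?_
    rintro _ ⟨y, hy, rfl⟩ ⟨x, hx⟩
    have hgx : g x = β₀ := hθ (show (θ (g x) : Ω) = θ β₀ by rw [← hfa, hx, hfN])
    exact hy (hN β₀ ((ha₀ x hgx).symm.trans hx)).symm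
  have hk : contract a ≤ 1 := by
    have hsub : {α | (a ⁻¹' {α}).Infinite} ⊆ {N β₀ x₀} := by
      intro α hα
      obtain ⟨x, rfl⟩ := hα.nonempty
      by_cases hgx : g x = β₀
      · exact ha₀ x hgx
      · exact absurd (Subsingleton.finite fun y hy z hz =>
          (ha hgx hy.symm).symm.trans (ha hgx hz.symm)) hα
    calc contract a ≤ #({N β₀ x₀} : Set Ω) := mk_le_mk_of_subset hsub
      _ = 1 := mk_singleton _
  have : Nonempty Ω := ⟨x₀⟩
  obtain ⟨b, hb, hcb, hdb, hkb⟩ := exists_leftInvOn_of_injOn g (fun z => (θ z : Ω)) hθ.injOn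
  refine ⟨a, b, fun x => hfa x ▸ hb x, hc, hd, hk, ?_, hdb, hkb⟩
  rw [hcb, defect]
  exact mk_le_mk_of_subset (compl_subset_compl.2 (range_subset_iff.2 fun x => ⟨a x, hfa x⟩))

variable {x : Function.End Ω}

lemma mem_S12345_of_collapse_eq_zero_of_defect_eq_zero (hc : collapse x = 0)
    (hd : defect x = 0) : x ∈ S12345 :=
  ⟨⟨⟨⟨Or.inl hc, Or.inr hd⟩, Or.inl (hc ▸ aleph0_pos)⟩, Or.inr (hd ▸ aleph0_pos)⟩,
    contract_lt_aleph0_of_collapse_lt (hc ▸ aleph0_pos)⟩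

lemma mem_S12345_of_lt_aleph0 (hc₀ : 0 < collapse x) (hc : collapse x < ℵ₀)
    (hd₀ : 0 < defect x) (hd : defect x < ℵ₀) : x ∈ S12345 :=
  ⟨⟨⟨⟨Or.inr hd₀, Or.inl hc₀⟩, Or.inl hc⟩, Or.inr hd⟩, contract_lt_aleph0_of_collapse_lt hc⟩

lemma mem_S12345_of_aleph0_le (hc : ℵ₀ ≤ collapse x) (hd : ℵ₀ ≤ defect x)
    (hk : contract x < ℵ₀) : x ∈ S12345 :=
  ⟨⟨⟨⟨Or.inr (aleph0_pos.trans_le hd), Or.inl (aleph0_pos.trans_le hc)⟩, Or.inr hd⟩, Or.inl hc⟩,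
    hk⟩

lemma notMem_SS_of_notMem_S12345 {i₀ : Fin 5} (hx : x ∉ S12345) (h : ∀ i ≠ i₀, x ∈ SS i) :
    x ∉ SS i₀ := fun h₀ => by
  have h : ∀ i, x ∈ SS i := fun i => if hi : i = i₀ then hi ▸ h₀ else h i hi
  exact hx ⟨⟨⟨⟨h 0, h 1⟩, h 2⟩, h 3⟩, h 4⟩

variable [Countable Ω] {f g : Function.End Ω}

lemma exists_eq_mul_mul_of_mem_S3_diff_S1 [Infinite Ω] (hf : f ∈ S3 \ S1) (hg : g ∈ S3 \ S1) :
    ∃ a ∈ S12345, ∃ b ∈ S12345, g = b * (f * a) := by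
  have key : ∀ x ∈ (S3 \ S1 : Set (Function.End Ω)),
      defect x = 0 ∧ 0 < collapse x ∧ collapse x < ℵ₀ := by
    rintro x ⟨h3, h1⟩
    simp only [S1, S3, mem_ofPred_eq, not_or, not_lt, nonpos_iff_eq_zero] at h1 h3
    obtain ⟨hc, hd⟩ := h1
    exact ⟨hd, pos_iff_ne_zero.2 hc, h3.resolve_right (by simp [hd, aleph0_ne_zero])⟩
  obtain ⟨hfd, hfc₀, hfc⟩ := key f hf
  obtain ⟨hgd, hgc₀, hgc⟩ := key g hg
  obtain ⟨a, b, hab, hca, hda, -, hcb, hdb, -⟩ :=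
    exists_factorization_of_infinite_range (infinite_range_of_defect_lt (hfd ▸ aleph0_pos))
      (infinite_range_of_defect_lt (hgd ▸ aleph0_pos))
  exact ⟨a, mem_S12345_of_lt_aleph0 (hca ▸ hgc₀) (hca ▸ hgc) (hda ▸ hfc₀) (hda ▸ hfc),
    b, mem_S12345_of_collapse_eq_zero_of_defect_eq_zero (hcb.trans hfd) (hdb.trans hgd),
    funext fun x => (hab x).symm⟩

lemma exists_eq_mul_mul_of_mem_S4_diff_S2 [Infinite Ω] (hf : f ∈ S4 \ S2) (hg : g ∈ S4 \ S2) :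
    ∃ a ∈ S12345, ∃ b ∈ S12345, g = b * (f * a) := by
  have key : ∀ x ∈ (S4 \ S2 : Set (Function.End Ω)),
      collapse x = 0 ∧ 0 < defect x ∧ defect x < ℵ₀ := by
    rintro x ⟨h4, h2⟩
    simp only [S2, S4, mem_ofPred_eq, not_or, not_lt, nonpos_iff_eq_zero] at h2 h4
    obtain ⟨hc, hd⟩ := h2
    exact ⟨hc, pos_iff_ne_zero.2 hd, h4.resolve_left (by simp [hc, aleph0_ne_zero])⟩
  obtain ⟨hfc, hfd₀, hfd⟩ := key f hf
  obtain ⟨hgc, hgd₀, hgd⟩ := key g hg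
  obtain ⟨a, b, hab, hca, hda, -, hcb, hdb, -⟩ :=
    exists_factorization_of_infinite_range (infinite_range_of_defect_lt hfd)
      (infinite_range_of_defect_lt hgd)
  exact ⟨a, mem_S12345_of_collapse_eq_zero_of_defect_eq_zero (hca.trans hgc) (hda.trans hfc),
    b, mem_S12345_of_lt_aleph0 (hcb ▸ hfd₀) (hcb ▸ hfd) (hdb ▸ hgd₀) (hdb ▸ hgd),
    funext fun x => (hab x).symm⟩

lemma exists_eq_mul_mul_of_mem_S1_inter_S5_diff_S3 [Infinite Ω] (hf : f ∈ (S1 ∩ S5) \ S3)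
    (hg : g ∈ (S1 ∩ S5) \ S3) : ∃ a ∈ S12345, ∃ b ∈ S12345, g = b * (f * a) := by
  have key : ∀ x ∈ ((S1 ∩ S5) \ S3 : Set (Function.End Ω)),
      ℵ₀ ≤ collapse x ∧ 0 < defect x ∧ defect x < ℵ₀ ∧ contract x < ℵ₀ := by
    rintro x ⟨⟨h1, h5⟩, h3⟩
    simp only [S1, S3, mem_ofPred_eq, not_or, not_lt, not_le] at h1 h3
    obtain ⟨hc, hd⟩ := h3
    exact ⟨hc, h1.resolve_left fun h => by simp [h, aleph0_ne_zero] at hc, hd, h5⟩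
  obtain ⟨hfc, hfd₀, hfd, -⟩ := key f hf
  obtain ⟨hgc, hgd₀, hgd, hgk⟩ := key g hg
  obtain ⟨a, b, hab, hca, hda, hka, hcb, hdb, -⟩ :=
    exists_factorization_of_infinite_range (infinite_range_of_defect_lt hfd)
      (infinite_range_of_defect_lt hgd)
  exact ⟨a, mem_S12345_of_aleph0_le (hca ▸ hgc) (hda ▸ hfc) (hka ▸ hgk),
    b, mem_S12345_of_lt_aleph0 (hcb ▸ hfd₀) (hcb ▸ hfd) (hdb ▸ hgd₀) (hdb ▸ hgd),
    funext fun x => (hab x).symm⟩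

lemma exists_eq_mul_mul_of_mem_S2_diff_S4 [Infinite Ω] (hf : f ∈ S2 \ S4) (hg : g ∈ S2 \ S4) :
    ∃ a ∈ S12345, ∃ b ∈ S12345, g = b * (f * a) := by
  have key : ∀ x ∈ (S2 \ S4 : Set (Function.End Ω)),
      0 < collapse x ∧ collapse x < ℵ₀ ∧ ℵ₀ ≤ defect x := by
    rintro x ⟨h2, h4⟩
    simp only [S2, S4, mem_ofPred_eq, not_or, not_lt, not_le] at h2 h4
    obtain ⟨hc, hd⟩ := h4
    exact ⟨h2.resolve_right fun h => by simp [h, aleph0_ne_zero] at hd, hc, hd⟩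
  obtain ⟨hfc₀, hfc, hfd⟩ := key f hf
  obtain ⟨hgc₀, hgc, hgd⟩ := key g hg
  obtain ⟨a, b, hab, hca, hda, -, hcb, hdb, hkb⟩ :=
    exists_factorization_of_infinite_range (infinite_range_of_collapse_lt hfc)
      (infinite_range_of_collapse_lt hgc)
  exact ⟨a, mem_S12345_of_lt_aleph0 (hca ▸ hgc₀) (hca ▸ hgc) (hda ▸ hfc₀) (hda ▸ hfc),
    b, mem_S12345_of_aleph0_le (hcb ▸ hfd) (hdb ▸ hgd) (hkb.trans_lt one_lt_aleph0),
    funext fun x => (hab x).symm⟩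

lemma exists_eq_mul_mul_of_mem_S3_diff_S5 (hf : f ∈ S3 \ S5) (hg : g ∈ S3 \ S5) :
    ∃ a ∈ S12345, ∃ b ∈ S12345, g = b * (f * a) := by
  have key : ∀ x ∈ (S3 \ S5 : Set (Function.End Ω)),
      {α | (x ⁻¹' {α}).Infinite}.Infinite ∧ ℵ₀ ≤ defect x := by
    rintro x ⟨h3, h5⟩
    simp only [S5, contract, mem_ofPred_eq, not_lt, aleph0_le_mk_iff, infinite_coe_iff] at h5
    obtain ⟨β, hβ⟩ := h5.nonempty
    exact ⟨h5, h3.resolve_left (aleph0_le_collapse_of_infinite_fiber hβ).not_gt⟩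
  obtain ⟨hfk, hfd⟩ := key f hf
  obtain ⟨hgk, hgd⟩ := key g hg
  obtain ⟨a, b, hab, hca, hda, hka, hcb, hdb, hkb⟩ :=
    exists_factorization_of_infinite_contract hfk hgk.nonempty.some_mem
  exact ⟨a, mem_S12345_of_aleph0_le hca hda (hka.trans_lt one_lt_aleph0),
    b, mem_S12345_of_aleph0_le (hfd.trans hcb) (hdb ▸ hgd) (hkb.trans_lt one_lt_aleph0),
    funext fun x => (hab x).symm⟩

lemma exists_eq_mul_mul [Infinite Ω] {i₀ : Fin 5} (hf : ∀ i ≠ i₀, f ∈ SS i) (hf₀ : f ∉ S12345)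
    (hg : ∀ i ≠ i₀, g ∈ SS i) (hg₀ : g ∉ S12345) :
    ∃ a ∈ S12345, ∃ b ∈ S12345, g = b * (f * a) := by
  have hf₀ := notMem_SS_of_notMem_S12345 hf₀ hf
  have hg₀ := notMem_SS_of_notMem_S12345 hg₀ hg
  fin_cases i₀
  · exact exists_eq_mul_mul_of_mem_S3_diff_S1 ⟨hf 2 (by decide), hf₀⟩ ⟨hg 2 (by decide), hg₀⟩
  · exact exists_eq_mul_mul_of_mem_S4_diff_S2 ⟨hf 3 (by decide), hf₀⟩ ⟨hg 3 (by decide), hg₀⟩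
  · exact exists_eq_mul_mul_of_mem_S1_inter_S5_diff_S3 ⟨⟨hf 0 (by decide), hf 4 (by decide)⟩, hf₀⟩
      ⟨⟨hg 0 (by decide), hg 4 (by decide)⟩, hg₀⟩
  · exact exists_eq_mul_mul_of_mem_S2_diff_S4 ⟨hf 1 (by decide), hf₀⟩ ⟨hg 1 (by decide), hg₀⟩
  · exact exists_eq_mul_mul_of_mem_S3_diff_S5 ⟨hf 2 (by decide), hf₀⟩ ⟨hg 2 (by decide), hg₀⟩

end Transformation

open Transformation in
/-- `S_{1,2,3,4,5}` is maximal in `S_I` for every four-element subset `I` of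
`{1,2,3,4,5}`. -/
theorem stmt19 (Ω : Type) [Countable Ω] [Infinite Ω] :
    ∀ I : Finset (Fin 5), I.card = 4 →
      ¬ ∃ T : Set (Function.End Ω),
          (∀ a ∈ T, ∀ b ∈ T, a * b ∈ T) ∧ S12345 ⊂ T ∧ T ⊂ ⋂ i ∈ I, SS i := by
  rintro I hI ⟨T, hmul, hST, hTS⟩
  obtain ⟨i₀, rfl⟩ : ∃ i₀, I = {i₀}ᶜ := by
    obtain ⟨i₀, hi₀⟩ := Finset.card_eq_one.1 (by rw [Finset.card_compl, hI]; rfl : Iᶜ.card = 1)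
    exact ⟨i₀, by rw [← hi₀, compl_compl]⟩
  have hmem : ∀ {x : Function.End Ω}, x ∈ ⋂ i ∈ ({i₀}ᶜ : Finset (Fin 5)), SS i ↔
      ∀ i ≠ i₀, x ∈ SS i := by simp
  obtain ⟨f, hfT, hfS⟩ := Set.exists_of_ssubset hST
  refine hTS.not_superset fun g hg => ?_
  by_cases hgS : g ∈ S12345
  · exact hST.subset hgS
  obtain ⟨a, ha, b, hb, rfl⟩ :=
    exists_eq_mul_mul (hmem.1 (hTS.subset hfT)) hfS (hmem.1 hg) hgS
  exact hmul b (hST.subset hb) _ (hmul f hfT a (hST.subset ha))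
end
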